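/- Let Λ ⊂ ℝ^d be the lattice generated by v₁ = (4+δ)e₁ and vᵢ = −(2+δ/2)e₁ + 2√3 eᵢ for i = 2,…,d, where δ > 0 and e₁,…,e_d are the standard basis vectors. Then any two distinct points of Λ are at Euclidean distance strictly greater than 4. -/

import Mathlib

open Real Finset

/-- The generating vectors in `ℝ^d`: `v₁ = (4+δ)e₁`, and
`vᵢ = −(2+δ/2)e₁ + 2√3 eᵢ` for `i ≠ 1`. -/
noncomputable def latVd (d : ℕ) [NeZero d] (δ : ℝ) (i : Fin d) : EuclideanSpace ℝ (Fin d) :=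
  if i = 0 then (4 + δ) • EuclideanSpace.single (0 : Fin d) (1 : ℝ)
  else (-(2 + δ / 2)) • EuclideanSpace.single (0 : Fin d) (1 : ℝ) +
    (2 * Real.sqrt 3) • EuclideanSpace.single i (1 : ℝ)

/-!
Write `c = 2 + δ/2`, so that `v₁ = 2c e₁`. For integer coefficients `γ` (indexed from `0`), the
point `∑ γᵢ vᵢ` has squared norm `c² m² + 12 T` with `m = 2γ₀ - ∑_{i≠0} γᵢ` and
`T = ∑_{i≠0} γᵢ²`. Since `γ² ≡ γ (mod 2)`, `m ≡ T (mod 2)`. If `T ≥ 2` the norm² is at least 24;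
if `T = 1` then `m` is odd, so the norm² is at least `c² + 12 > 16`; if `T = 0` then `m` is even
and nonzero, so the norm² is at least `4c² > 16`.
-/

theorem sixteen_lt_of_even_sub {c : ℝ} (hc : 2 < c) {m T : ℤ} (hT : 0 ≤ T)
    (hpar : Even (m - T)) (hne : m ≠ 0 ∨ T ≠ 0) : 16 < c ^ 2 * m ^ 2 + 12 * T := by
  have hc2 : 4 < c ^ 2 := by nlinarith
  obtain rfl | rfl | hT2 : T = 0 ∨ T = 1 ∨ 2 ≤ T := by omega
  · obtain ⟨k, rfl⟩ : Even m := by simpa using hpar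
    have hk : k ≠ 0 := by omega
    have hk1 : (1 : ℝ) ≤ k ^ 2 := by exact_mod_cast (by positivity : 0 < k ^ 2)
    push_cast
    nlinarith
  · have hm : m ≠ 0 := by
      rintro rfl
      simp at hpar
    have hm1 : (1 : ℝ) ≤ m ^ 2 := by exact_mod_cast (by positivity : 0 < m ^ 2)
    push_cast
    nlinarith
  · have : (2 : ℝ) ≤ T := by exact_mod_cast hT2
    nlinarith [sq_nonneg (c * m)]

section

variable (d : ℕ) [NeZero d] (δ : ℝ)

theorem latVd_apply (i j : Fin d) :
    latVd d δ i j =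
      if j = 0 then (if i = 0 then 4 + δ else -(2 + δ / 2))
      else if i = j then 2 * √3 else 0 := by
  unfold latVd
  split_ifs <;> simp_all [eq_comm]

theorem sum_smul_latVd_apply_zero (a : Fin d → ℝ) :
    (∑ i, a i • latVd d δ i) 0 = (2 + δ / 2) * (2 * a 0 - ∑ i ∈ univ.erase 0, a i) := by
  simp only [WithLp.ofLp_sum, WithLp.ofLp_smul, Finset.sum_apply, Pi.smul_apply, smul_eq_mul,
    latVd_apply, if_true]
  rw [← add_sum_erase _ _ (mem_univ 0),
    sum_congr rfl fun i hi => by rw [if_neg (ne_of_mem_erase hi)], if_pos rfl, ← sum_mul]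
  ring

theorem sum_smul_latVd_apply_of_ne_zero (a : Fin d → ℝ) {j : Fin d} (hj : j ≠ 0) :
    (∑ i, a i • latVd d δ i) j = 2 * √3 * a j := by
  simp [WithLp.ofLp_sum, Finset.sum_apply, latVd_apply, hj, mul_comm]

theorem norm_sq_sum_smul_latVd (a : Fin d → ℝ) :
    ‖∑ i, a i • latVd d δ i‖ ^ 2 =
      (2 + δ / 2) ^ 2 * (2 * a 0 - ∑ i ∈ univ.erase 0, a i) ^ 2
        + 12 * ∑ i ∈ univ.erase 0, a i ^ 2 := by
  rw [EuclideanSpace.real_norm_sq_eq, ← add_sum_erase _ _ (mem_univ 0), mul_sum,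
    sum_smul_latVd_apply_zero, mul_pow]
  congr 1
  refine sum_congr rfl fun j hj => ?_
  rw [sum_smul_latVd_apply_of_ne_zero _ _ _ (ne_of_mem_erase hj), mul_pow, mul_pow,
    sq_sqrt zero_le_three]
  ring

variable {δ}

theorem sixteen_lt_norm_sq_sum_smul_latVd (hδ : 0 < δ) (γ : Fin d → ℤ)
    (hx : ∑ i, (γ i : ℝ) • latVd d δ i ≠ 0) :
    16 < ‖∑ i, (γ i : ℝ) • latVd d δ i‖ ^ 2 := by
  set m : ℤ := 2 * γ 0 - ∑ i ∈ univ.erase 0, γ i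
  set T : ℤ := ∑ i ∈ univ.erase 0, γ i ^ 2
  have hnorm : ‖∑ i, (γ i : ℝ) • latVd d δ i‖ ^ 2 = (2 + δ / 2) ^ 2 * m ^ 2 + 12 * T := by
    rw [norm_sq_sum_smul_latVd]
    push_cast [m, T]
    rfl
  have hpar : Even (m - T) := by
    have hsum : Even (∑ i ∈ univ.erase 0, γ i * (γ i + 1)) := by
      rw [even_iff_two_dvd]
      exact dvd_sum fun i _ => (Int.even_mul_succ_self (γ i)).two_dvd
    have hmT : m - T = 2 * γ 0 - ∑ i ∈ univ.erase 0, γ i * (γ i + 1) := by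
      rw [sub_sub, ← sum_add_distrib]
      exact congrArg _ (sum_congr rfl fun i _ => by ring)
    rw [hmT]
    exact (even_two_mul _).sub hsum
  have hne : m ≠ 0 ∨ T ≠ 0 := by
    by_contra! h
    apply hx
    rw [← norm_eq_zero, ← sq_eq_zero_iff, hnorm, h.1, h.2]
    simp
  rw [hnorm]
  exact sixteen_lt_of_even_sub (by linarith) (sum_nonneg fun i _ => sq_nonneg _) hpar hne

end

/-- any two distinct points of the lattice
`Λ_d = {∑ᵢ αᵢ vᵢ : α ∈ ℤ^d}` in `ℝ^d` are at Euclidean distance strictly greater than `4`. -/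
theorem lattice_min_dist_d (d : ℕ) [NeZero d] (δ : ℝ) (hδ : 0 < δ)
    (p q : EuclideanSpace ℝ (Fin d))
    (hp : ∃ α : Fin d → ℤ, p = ∑ i, (α i : ℝ) • latVd d δ i)
    (hq : ∃ α : Fin d → ℤ, q = ∑ i, (α i : ℝ) • latVd d δ i)
    (hpq : p ≠ q) : 4 < dist p q := by
  obtain ⟨α, rfl⟩ := hp
  obtain ⟨β, rfl⟩ := hq
  have hsub : (∑ i, (α i : ℝ) • latVd d δ i) - ∑ i, (β i : ℝ) • latVd d δ i
      = ∑ i, ((α - β) i : ℝ) • latVd d δ i := by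
    simp only [← sum_sub_distrib, ← sub_smul, Pi.sub_apply, Int.cast_sub]
  have h16 := sixteen_lt_norm_sq_sum_smul_latVd d hδ (α - β) (hsub ▸ sub_ne_zero.mpr hpq)
  rw [dist_eq_norm, hsub]
  nlinarith [norm_nonneg (∑ i, ((α - β) i : ℝ) • latVd d δ i)]
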